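/- Let D be a canonical DBM over n clocks with D 0 k ≤ 0 for every k, and let M : Fin (n+1) → ℝ. Then Extra_M(D) i j ≤ Extra_M⁺(D) i j for all i, j, and consequently ⟦Extra_M(D)⟧ ⊆ ⟦Extra_M⁺(D)⟧. -/

import Mathlib

/-- A DBM over `n` clocks: index `0` is the reference clock. -/
abbrev DBM (n : ℕ) := Fin (n + 1) → Fin (n + 1) → WithTop ℝ

/-- The zone of a DBM. -/
def Zone {n : ℕ} (D : DBM n) : Set (Fin (n + 1) → ℝ) :=
  {v | v 0 = 0 ∧ ∀ i j, ((v i - v j : ℝ) : WithTop ℝ) ≤ D i j}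

/-- A DBM is canonical if it satisfies the triangle inequality. -/
def Canonical {n : ℕ} (D : DBM n) : Prop :=
  ∀ i j k, D i j ≤ D i k + D k j

/-- The `M`-extrapolation of a DBM. -/
noncomputable def ExtraM {n : ℕ} (M : Fin (n + 1) → ℝ) (D : DBM n) : DBM n := fun i j =>
  if ((M i : ℝ) : WithTop ℝ) < D i j then ⊤
  else if D i j < ((-(M j) : ℝ) : WithTop ℝ) then ((-(M j) : ℝ) : WithTop ℝ)
  else D i j

/-- The improved extrapolation `Extra_M⁺` (cases tested in order). -/
noncomputable def ExtraMPlus {n : ℕ} (M : Fin (n + 1) → ℝ) (D : DBM n) : DBM n := fun i j =>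
  if ((M i : ℝ) : WithTop ℝ) < D i j then ⊤
  else if D 0 i < ((-(M i) : ℝ) : WithTop ℝ) then ⊤
  else if i ≠ 0 ∧ D 0 j < ((-(M j) : ℝ) : WithTop ℝ) then ⊤
  else if i = 0 ∧ D 0 j < ((-(M j) : ℝ) : WithTop ℝ) then ((-(M j) : ℝ) : WithTop ℝ)
  else D i j

theorem Canonical.apply_zero_le_apply {n : ℕ} {D : DBM n} (hD : Canonical D) {i : Fin (n + 1)}
    (hi : D 0 i ≤ 0) (j : Fin (n + 1)) : D 0 j ≤ D i j :=
  calc D 0 j ≤ D 0 i + D i j := hD 0 j i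
    _ ≤ 0 + D i j := add_le_add_left hi _
    _ = D i j := zero_add _

theorem zone_mono {n : ℕ} {D D' : DBM n} (h : ∀ i j, D i j ≤ D' i j) : Zone D ⊆ Zone D' :=
  fun _ ⟨hv0, hv⟩ => ⟨hv0, fun i j => (hv i j).trans (h i j)⟩

theorem extraM_apply_le_extraMPlus_apply {n : ℕ} {D : DBM n} (hD : Canonical D)
    (M : Fin (n + 1) → ℝ) {i : Fin (n + 1)} (hi : D 0 i ≤ 0) (j : Fin (n + 1)) :
    ExtraM M D i j ≤ ExtraMPlus M D i j := by
  unfold ExtraM ExtraMPlus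
  by_cases hupper : ((M i : ℝ) : WithTop ℝ) < D i j
  · simp only [if_pos hupper, le_refl]
  by_cases hrow_i : D 0 i < ((-(M i) : ℝ) : WithTop ℝ)
  · simp only [if_neg hupper, if_pos hrow_i, le_top]
  by_cases hrow_j : D 0 j < ((-(M j) : ℝ) : WithTop ℝ)
  · rw [if_neg hupper, if_neg hupper, if_neg hrow_i]
    rcases eq_or_ne i 0 with rfl | hi0
    · rw [if_pos hrow_j, if_neg fun h => h.1 rfl, if_pos ⟨rfl, hrow_j⟩]
    · rw [if_pos (show i ≠ 0 ∧ _ from ⟨hi0, hrow_j⟩)]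
      exact le_top
  · have hlower : ¬ D i j < ((-(M j) : ℝ) : WithTop ℝ) :=
      fun h => hrow_j ((hD.apply_zero_le_apply hi j).trans_lt h)
    rw [if_neg hupper, if_neg hupper, if_neg hrow_i, if_neg hlower, if_neg fun h => hrow_j h.2,
      if_neg fun h => hrow_j h.2]

/-- for a canonical DBM with `D 0 k ≤ 0` for all `k`, the improved
extrapolation is coarser: `Extra_M(D) ≤ Extra_M⁺(D)` entrywise, and
`⟦Extra_M(D)⟧ ⊆ ⟦Extra_M⁺(D)⟧`. -/
theorem extraM_le_extraMPlus {n : ℕ} (D : DBM n) (hD : Canonical D)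
    (h0 : ∀ k, D 0 k ≤ 0) (M : Fin (n + 1) → ℝ) :
    (∀ i j, ExtraM M D i j ≤ ExtraMPlus M D i j) ∧
      Zone (ExtraM M D) ⊆ Zone (ExtraMPlus M D) := by
  have hle : ∀ i j, ExtraM M D i j ≤ ExtraMPlus M D i j :=
    fun i => extraM_apply_le_extraMPlus_apply hD M (h0 i)
  exact ⟨hle, zone_mono hle⟩
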